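/- Let Ω be a finite set with fixed-point-free involutions s₁, s₂, and let G act on Ω commuting with s₁ and s₂. Suppose an orbit O of ⟨s₁,s₂⟩ meets exactly three G-orbit classes A, B, C, with s₁ exchanging A∩O with B∩O and fixing C∩O setwise, and s₂ exchanging B∩O with C∩O and fixing A∩O setwise. Then |O| is divisible by 6. -/

import Mathlib

/-!
Both `s₁` and `s₂` preserve the `⟨s₁, s₂⟩`-orbit `O`. Since `s₂` preserves `O ∩ A` and acts on
it as a fixed-point-free involution, `|O ∩ A|` is even. The injections `s₁ : O ∩ A ⇄ O ∩ B` and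
`s₂ : O ∩ B ⇄ O ∩ C` give `|O ∩ A| = |O ∩ B| = |O ∩ C|`, and since distinct
`G`-orbits are disjoint these three pieces partition `O`, so `|O| = 3 |O ∩ A|`.
-/

open Function Set MulAction

theorem Function.Involutive.even_card_of_forall_ne {α : Type*} [Finite α] {f : α → α}
    (hf : Involutive f) (hfix : ∀ x, f x ≠ x) : Even (Nat.card α) := by
  classical
  have := Fintype.ofFinite α
  have hsq : hf.toPerm ^ 2 ^ 1 = 1 := by ext x; simp [sq, hf x]
  have hsupport : hf.toPerm.supportᶜ = ∅ := by ext x; simp [hfix x]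
  have hmod := Equiv.Perm.card_compl_support_modEq (p := 2) hsq
  rw [hsupport, Finset.card_empty] at hmod
  rw [Nat.card_eq_fintype_card, Nat.even_iff]
  exact hmod.symm

theorem Set.MapsTo.even_ncard_of_involutive {α : Type*} {f : α → α} {s : Set α} [Finite s]
    (hs : MapsTo f s s) (hf : Involutive f) (hfix : ∀ x ∈ s, f x ≠ x) : Even s.ncard :=
  Involutive.even_card_of_forall_ne (f := hs.restrict) (fun x ↦ Subtype.ext (hf x))
    (fun x hx ↦ hfix x x.2 (congrArg Subtype.val hx))

theorem Set.ncard_eq_of_mapsTo_of_mapsTo {α β : Type*} {s : Set α} {t : Set β} [Finite s]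
    [Finite t] {f : α → β} {g : β → α} (hf : MapsTo f s t) (hg : MapsTo g t s)
    (hfi : InjOn f s) (hgi : InjOn g t) : s.ncard = t.ncard :=
  le_antisymm (ncard_le_ncard_of_injOn f hf hfi) (ncard_le_ncard_of_injOn g hg hgi)

theorem Set.ncard_eq_add_add_of_subset_union {α : Type*} {s A B C : Set α} [Finite s]
    (hs : s ⊆ A ∪ B ∪ C) (hAB : Disjoint A B) (hAC : Disjoint A C) (hBC : Disjoint B C) :
    s.ncard = (s ∩ A).ncard + (s ∩ B).ncard + (s ∩ C).ncard := by
  have hsplit : s = s ∩ A ∪ s ∩ B ∪ s ∩ C := by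
    rw [← inter_union_distrib_left, ← inter_union_distrib_left, inter_eq_left.mpr hs]
  have hdisj : Disjoint (s ∩ A ∪ s ∩ B) (s ∩ C) :=
    disjoint_union_left.mpr ⟨hAC.mono inter_subset_right inter_subset_right,
      hBC.mono inter_subset_right inter_subset_right⟩
  conv_lhs => rw [hsplit]
  rw [ncard_union_eq hdisj (toFinite _) (toFinite _),
    ncard_union_eq (hAB.mono inter_subset_right inter_subset_right) (toFinite _) (toFinite _)]

theorem MulAction.disjoint_of_ne_of_exists_eq_orbit {G X : Type*} [Group G] [MulAction G X]
    {A B : Set X} (hA : ∃ a, A = orbit G a) (hB : ∃ b, B = orbit G b) (hAB : A ≠ B) :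
    Disjoint A B := by
  obtain ⟨a, rfl⟩ := hA
  obtain ⟨b, rfl⟩ := hB
  exact (orbit.eq_or_disjoint a b).resolve_left hAB

theorem Equiv.Perm.mapsTo_orbit_of_mem {Ω : Type*} {H : Subgroup (Perm Ω)} {σ : Perm Ω}
    (hσ : σ ∈ H) (x : Ω) : MapsTo σ (orbit H x) (orbit H x) := fun y hy ↦
  orbit_eq_iff.mpr hy ▸ mem_orbit y (⟨σ, hσ⟩ : H)

theorem stmt_6_general (Ω : Type*) [Fintype Ω] (s₁ s₂ : Equiv.Perm Ω)
    (h2inv : ∀ x, s₂ (s₂ x) = x)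
    (h2f : ∀ x, s₂ x ≠ x)
    (G : Type*) [Group G] [MulAction G Ω]
    (Φ₀ : Ω) (O : Set Ω)
    (hO : O = (MulAction.orbit (Subgroup.closure ({s₁, s₂} : Set (Equiv.Perm Ω))) Φ₀ : Set Ω))
    (A B C : Set Ω)
    (hA : ∃ a, A = MulAction.orbit G a) (hB : ∃ b, B = MulAction.orbit G b)
    (hC : ∃ c, C = MulAction.orbit G c)
    (hAB : A ≠ B) (hAC : A ≠ C) (hBC : B ≠ C)
    (hcover : O ⊆ A ∪ B ∪ C)
    -- s₁ exchanges A∩O with B∩O and fixes C∩O setwise: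
    (h1A : ∀ Φ ∈ O ∩ A, s₁ Φ ∈ B) (h1B : ∀ Φ ∈ O ∩ B, s₁ Φ ∈ A)
    -- s₂ exchanges B∩O with C∩O and fixes A∩O setwise:
    (h2B : ∀ Φ ∈ O ∩ B, s₂ Φ ∈ C) (h2C : ∀ Φ ∈ O ∩ C, s₂ Φ ∈ B) (h2A : ∀ Φ ∈ O ∩ A, s₂ Φ ∈ A) :
    6 ∣ Nat.card O := by
  have hs₁O : MapsTo s₁ O O :=
    hO ▸ Equiv.Perm.mapsTo_orbit_of_mem (Subgroup.subset_closure (by simp)) Φ₀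
  have hs₂O : MapsTo s₂ O O :=
    hO ▸ Equiv.Perm.mapsTo_orbit_of_mem (Subgroup.subset_closure (by simp)) Φ₀
  have hAB' : (O ∩ A).ncard = (O ∩ B).ncard :=
    ncard_eq_of_mapsTo_of_mapsTo (fun x hx ↦ ⟨hs₁O hx.1, h1A x hx⟩)
      (fun x hx ↦ ⟨hs₁O hx.1, h1B x hx⟩) s₁.injective.injOn s₁.injective.injOn
  have hBC' : (O ∩ B).ncard = (O ∩ C).ncard :=
    ncard_eq_of_mapsTo_of_mapsTo (fun x hx ↦ ⟨hs₂O hx.1, h2B x hx⟩)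
      (fun x hx ↦ ⟨hs₂O hx.1, h2C x hx⟩) s₂.injective.injOn s₂.injective.injOn
  obtain ⟨k, hk⟩ : Even (O ∩ A).ncard :=
    MapsTo.even_ncard_of_involutive (fun x hx ↦ ⟨hs₂O hx.1, h2A x hx⟩) h2inv fun x _ ↦ h2f x
  rw [Nat.card_coe_set_eq, ncard_eq_add_add_of_subset_union hcover
    (disjoint_of_ne_of_exists_eq_orbit hA hB hAB) (disjoint_of_ne_of_exists_eq_orbit hA hC hAC)
    (disjoint_of_ne_of_exists_eq_orbit hB hC hBC), ← hBC', ← hAB', hk]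
  omega

theorem stmt_6 (Ω : Type*) [Fintype Ω] (s₁ s₂ : Equiv.Perm Ω)
    (h1inv : ∀ x, s₁ (s₁ x) = x) (h2inv : ∀ x, s₂ (s₂ x) = x)
    (h1f : ∀ x, s₁ x ≠ x) (h2f : ∀ x, s₂ x ≠ x)
    (G : Type*) [Group G] [MulAction G Ω]
    (hc1 : ∀ (g : G) (x : Ω), s₁ (g • x) = g • s₁ x)
    (hc2 : ∀ (g : G) (x : Ω), s₂ (g • x) = g • s₂ x)
    (Φ₀ : Ω) (O : Set Ω)
    (hO : O = (MulAction.orbit (Subgroup.closure ({s₁, s₂} : Set (Equiv.Perm Ω))) Φ₀ : Set Ω))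
    (A B C : Set Ω)
    (hA : ∃ a, A = MulAction.orbit G a) (hB : ∃ b, B = MulAction.orbit G b)
    (hC : ∃ c, C = MulAction.orbit G c)
    (hAB : A ≠ B) (hAC : A ≠ C) (hBC : B ≠ C)
    (hcover : O ⊆ A ∪ B ∪ C)
    (hOA : (O ∩ A).Nonempty) (hOB : (O ∩ B).Nonempty) (hOC : (O ∩ C).Nonempty)
    -- s₁ exchanges A∩O with B∩O and fixes C∩O setwise:
    (h1A : ∀ Φ ∈ O ∩ A, s₁ Φ ∈ B) (h1B : ∀ Φ ∈ O ∩ B, s₁ Φ ∈ A) (h1C : ∀ Φ ∈ O ∩ C, s₁ Φ ∈ C)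
    -- s₂ exchanges B∩O with C∩O and fixes A∩O setwise:
    (h2B : ∀ Φ ∈ O ∩ B, s₂ Φ ∈ C) (h2C : ∀ Φ ∈ O ∩ C, s₂ Φ ∈ B) (h2A : ∀ Φ ∈ O ∩ A, s₂ Φ ∈ A) :
    6 ∣ Nat.card O :=
  stmt_6_general Ω s₁ s₂ h2inv h2f G Φ₀ O hO A B C hA hB hC hAB hAC hBC hcover h1A h1B h2B h2C h2A
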